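/- For a connected graph G with n vertices and m edges, Alb(G) ≤ Z_2(G) − 2m, with equality if and only if G is the star K_{1,n-1}. -/
import Mathlib


open Finset

/-- The Albertson irregularity index `Alb(G) = ∑_{uv∈E(G)} |d(u)-d(v)|`. -/
noncomputable def Alb {V : Type*} [Fintype V] (G : SimpleGraph V) [DecidableRel G.Adj] : ℝ :=
  (∑ u : V, ∑ v ∈ G.neighborFinset u, |(G.degree u : ℝ) - (G.degree v : ℝ)|) / 2

/-- The first Zagreb index `Z_2(G) = ∑_{v∈V(G)} d(v)^2`. -/
noncomputable def Z2 {V : Type*} [Fintype V] (G : SimpleGraph V) [DecidableRel G.Adj] : ℝ :=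
  ∑ v : V, (G.degree v : ℝ) ^ 2

private lemma swap_sum {V : Type*} [Fintype V] [DecidableEq V] (G : SimpleGraph V)
    [DecidableRel G.Adj] (f : V → ℝ) :
    ∑ u : V, ∑ v ∈ G.neighborFinset u, f v = ∑ v : V, (G.degree v : ℝ) * f v := by
  have h : ∀ u : V, G.neighborFinset u = univ.filter (fun v => G.Adj u v) := by
    intro u; ext v; simp [SimpleGraph.mem_neighborFinset]
  simp_rw [h, sum_filter]
  rw [Finset.sum_comm]
  congr 1; ext v
  rw [← Finset.sum_filter]
  have : (univ.filter (fun u => G.Adj u v)) = G.neighborFinset v := by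
    ext u; simp [SimpleGraph.mem_neighborFinset, G.adj_comm]
  rw [this, Finset.sum_const, SimpleGraph.card_neighborFinset_eq_degree, nsmul_eq_mul]

private lemma deg_pos {V : Type*} [Fintype V] (G : SimpleGraph V) [DecidableRel G.Adj]
    {u v : V} (h : G.Adj u v) : 1 ≤ G.degree u := by
  classical
  have : v ∈ G.neighborFinset u := (SimpleGraph.mem_neighborFinset G u v).2 h
  have := Finset.card_pos.2 ⟨v, this⟩
  rwa [SimpleGraph.card_neighborFinset_eq_degree] at this

private lemma abs_le_aux {x y : ℝ} (hx : 1 ≤ x) (hy : 1 ≤ y) :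
    |x - y| ≤ x + y - 2 := by
  rcases le_total x y with h | h
  · rw [abs_of_nonpos (by linarith)]; linarith
  · rw [abs_of_nonneg (by linarith)]; linarith

private lemma abs_eq_aux {x y : ℝ} (hx : 1 ≤ x) (hy : 1 ≤ y) :
    |x - y| = x + y - 2 ↔ x = 1 ∨ y = 1 := by
  rcases le_total x y with h | h
  · rw [abs_of_nonpos (by linarith)]
    constructor
    · intro h1; left; linarith
    · rintro (h1 | h1) <;> linarith
  · rw [abs_of_nonneg (by linarith)]
    constructor
    · intro h1; right; linarith
    · rintro (h1 | h1) <;> linarith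

/-- Closure argument: if every neighbor of `c` has degree 1, and `G` is connected,
then every vertex other than `c` is a degree-1 neighbor of `c`. -/
private lemma star_of_center {V : Type*} [Fintype V] [DecidableEq V] (G : SimpleGraph V)
    [DecidableRel G.Adj] (hG : G.Connected) (c : V)
    (hc : ∀ v, G.Adj c v → G.degree v = 1) :
    ∀ w : V, w ≠ c → G.Adj c w ∧ G.degree w = 1 := by
  have closed : ∀ a b : V, G.Walk a b → (a = c ∨ G.Adj c a) → (b = c ∨ G.Adj c b) := by
    intro a b p
    induction p with
    | nil => exact fun h => h
    | @cons x y z hadj q ih =>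
      intro hu
      apply ih
      rcases hu with rfl | hu
      · right; exact hadj
      · -- x is a neighbor of c with degree 1; its only neighbor is c
        have hdu : G.degree x = 1 := hc x hu
        have hcu : c ∈ G.neighborFinset x := (SimpleGraph.mem_neighborFinset G x c).2 hu.symm
        have hvu : y ∈ G.neighborFinset x := (SimpleGraph.mem_neighborFinset G x y).2 hadj
        have hcard : (G.neighborFinset x).card = 1 := by
          rwa [SimpleGraph.card_neighborFinset_eq_degree]
        obtain ⟨t, ht⟩ := Finset.card_eq_one.1 hcard
        rw [ht, Finset.mem_singleton] at hcu hvu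
        left; rw [hvu, hcu]
  intro w hw
  obtain ⟨p⟩ := hG.preconnected c w
  rcases closed c w p (Or.inl rfl) with rfl | h
  · exact absurd rfl hw
  · exact ⟨h, hc w h⟩

theorem stmt7 {V : Type*} [Fintype V] [DecidableEq V]
    (G : SimpleGraph V) [DecidableRel G.Adj] (hG : G.Connected) :
    Alb G ≤ Z2 G - 2 * (G.edgeFinset.card : ℝ) ∧
    (Alb G = Z2 G - 2 * (G.edgeFinset.card : ℝ) ↔
      -- G is the star K_{1, n-1}
      ∃ c : V, ∀ w : V, w ≠ c → G.Adj c w ∧ G.degree w = 1) := by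
  classical
  -- the double sum of (d u + d v - 2)
  have hT : ∑ u : V, ∑ v ∈ G.neighborFinset u,
        ((G.degree u : ℝ) + (G.degree v : ℝ) - 2)
      = 2 * Z2 G - 4 * (G.edgeFinset.card : ℝ) := by
    have h1 : ∑ u : V, ∑ _v ∈ G.neighborFinset u, (G.degree u : ℝ) = Z2 G := by
      simp only [Finset.sum_const, SimpleGraph.card_neighborFinset_eq_degree, nsmul_eq_mul]
      unfold Z2; congr 1; ext u; ring
    have h2 : ∑ u : V, ∑ v ∈ G.neighborFinset u, (G.degree v : ℝ) = Z2 G := by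
      rw [swap_sum]; unfold Z2; congr 1; ext u; ring
    have h3 : ∑ u : V, ∑ _v ∈ G.neighborFinset u, (2 : ℝ)
        = 4 * (G.edgeFinset.card : ℝ) := by
      simp only [Finset.sum_const, SimpleGraph.card_neighborFinset_eq_degree, nsmul_eq_mul]
      have := SimpleGraph.sum_degrees_eq_twice_card_edges G
      have hcast : ∑ v : V, (G.degree v : ℝ) = 2 * (G.edgeFinset.card : ℝ) := by
        exact_mod_cast congrArg (Nat.cast : ℕ → ℝ) this
      calc ∑ u : V, (G.degree u : ℝ) * 2 = (∑ u : V, (G.degree u : ℝ)) * 2 := by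
            rw [Finset.sum_mul]
        _ = 4 * (G.edgeFinset.card : ℝ) := by rw [hcast]; ring
    calc ∑ u : V, ∑ v ∈ G.neighborFinset u, ((G.degree u : ℝ) + (G.degree v : ℝ) - 2)
        = ∑ u : V, ((∑ _v ∈ G.neighborFinset u, (G.degree u : ℝ))
            + (∑ v ∈ G.neighborFinset u, (G.degree v : ℝ))
            - (∑ _v ∈ G.neighborFinset u, (2 : ℝ))) := by
          apply Finset.sum_congr rfl; intro u _
          rw [← Finset.sum_add_distrib, ← Finset.sum_sub_distrib]
      _ = (∑ u : V, ∑ _v ∈ G.neighborFinset u, (G.degree u : ℝ))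
            + (∑ u : V, ∑ v ∈ G.neighborFinset u, (G.degree v : ℝ))
            - (∑ u : V, ∑ _v ∈ G.neighborFinset u, (2 : ℝ)) := by
          rw [← Finset.sum_add_distrib, ← Finset.sum_sub_distrib]
      _ = 2 * Z2 G - 4 * (G.edgeFinset.card : ℝ) := by rw [h1, h2, h3]; ring
  have hterm : ∀ u : V, ∀ v ∈ G.neighborFinset u,
      |(G.degree u : ℝ) - (G.degree v : ℝ)| ≤ (G.degree u : ℝ) + (G.degree v : ℝ) - 2 := by
    intro u v hv
    rw [SimpleGraph.mem_neighborFinset] at hv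
    have hdu : (1 : ℝ) ≤ (G.degree u : ℝ) := by exact_mod_cast deg_pos G hv
    have hdv : (1 : ℝ) ≤ (G.degree v : ℝ) := by exact_mod_cast deg_pos G hv.symm
    exact abs_le_aux hdu hdv
  have hSle : ∑ u : V, ∑ v ∈ G.neighborFinset u, |(G.degree u : ℝ) - (G.degree v : ℝ)|
      ≤ ∑ u : V, ∑ v ∈ G.neighborFinset u, ((G.degree u : ℝ) + (G.degree v : ℝ) - 2) :=
    Finset.sum_le_sum fun u _ => Finset.sum_le_sum fun v hv => hterm u v hv
  have hle : Alb G ≤ Z2 G - 2 * (G.edgeFinset.card : ℝ) := by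
    unfold Alb
    rw [div_le_iff₀ (by norm_num : (0:ℝ) < 2)]
    calc ∑ u : V, ∑ v ∈ G.neighborFinset u, |(G.degree u : ℝ) - (G.degree v : ℝ)|
        ≤ 2 * Z2 G - 4 * (G.edgeFinset.card : ℝ) := hSle.trans_eq hT
      _ = (Z2 G - 2 * (G.edgeFinset.card : ℝ)) * 2 := by ring
  refine ⟨hle, ?_⟩
  constructor
  · -- equality implies star
    intro heq
    have hSeq : ∑ u : V, ∑ v ∈ G.neighborFinset u, |(G.degree u : ℝ) - (G.degree v : ℝ)|
        = ∑ u : V, ∑ v ∈ G.neighborFinset u, ((G.degree u : ℝ) + (G.degree v : ℝ) - 2) := by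
      unfold Alb at heq
      rw [div_eq_iff (by norm_num : (2:ℝ) ≠ 0)] at heq
      rw [hT]; linarith
    -- termwise equality
    have hzero : ∑ u : V, ∑ v ∈ G.neighborFinset u,
        (((G.degree u : ℝ) + (G.degree v : ℝ) - 2)
          - |(G.degree u : ℝ) - (G.degree v : ℝ)|) = 0 := by
      calc ∑ u : V, ∑ v ∈ G.neighborFinset u,
            (((G.degree u : ℝ) + (G.degree v : ℝ) - 2)
              - |(G.degree u : ℝ) - (G.degree v : ℝ)|)
          = ∑ u : V, ((∑ v ∈ G.neighborFinset u, ((G.degree u : ℝ) + (G.degree v : ℝ) - 2))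
              - ∑ v ∈ G.neighborFinset u, |(G.degree u : ℝ) - (G.degree v : ℝ)|) := by
            apply Finset.sum_congr rfl; intro u _; rw [← Finset.sum_sub_distrib]
        _ = (∑ u : V, ∑ v ∈ G.neighborFinset u, ((G.degree u : ℝ) + (G.degree v : ℝ) - 2))
              - ∑ u : V, ∑ v ∈ G.neighborFinset u, |(G.degree u : ℝ) - (G.degree v : ℝ)| := by
            rw [← Finset.sum_sub_distrib]
        _ = 0 := by rw [hSeq]; ring
    have hptw : ∀ u : V, ∀ v ∈ G.neighborFinset u,
        ((G.degree u : ℝ) + (G.degree v : ℝ) - 2)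
          - |(G.degree u : ℝ) - (G.degree v : ℝ)| = 0 := by
      have h1 := (Finset.sum_eq_zero_iff_of_nonneg (fun u _ =>
        Finset.sum_nonneg fun v hv => sub_nonneg.2 (hterm u v hv))).1 hzero
      intro u v hv
      exact (Finset.sum_eq_zero_iff_of_nonneg (fun v hv =>
        sub_nonneg.2 (hterm u v hv))).1 (h1 u (Finset.mem_univ u)) v hv
    -- every edge has an endpoint of degree 1
    have hP : ∀ u v : V, G.Adj u v → G.degree u = 1 ∨ G.degree v = 1 := by
      intro u v huv
      have hv : v ∈ G.neighborFinset u := (SimpleGraph.mem_neighborFinset G u v).2 huv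
      have h0 := hptw u v hv
      have hdu : (1 : ℝ) ≤ (G.degree u : ℝ) := by exact_mod_cast deg_pos G huv
      have hdv : (1 : ℝ) ≤ (G.degree v : ℝ) := by exact_mod_cast deg_pos G huv.symm
      have habs : |(G.degree u : ℝ) - (G.degree v : ℝ)|
          = (G.degree u : ℝ) + (G.degree v : ℝ) - 2 := by linarith
      rcases (abs_eq_aux hdu hdv).1 habs with h | h
      · left; exact_mod_cast h
      · right; exact_mod_cast h
    -- find a center
    by_cases hbig : ∃ c : V, 2 ≤ G.degree c
    · obtain ⟨c, hc2⟩ := hbig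
      refine ⟨c, star_of_center G hG c ?_⟩
      intro v hcv
      rcases hP c v hcv with h | h
      · omega
      · exact h
    · push_neg at hbig
      obtain ⟨c⟩ := hG.nonempty
      refine ⟨c, star_of_center G hG c ?_⟩
      intro v hcv
      have h1 := deg_pos G hcv.symm
      have h2 := hbig v
      omega
  · -- star implies equality
    rintro ⟨c, hc⟩
    have hptw : ∀ u : V, ∀ v ∈ G.neighborFinset u,
        |(G.degree u : ℝ) - (G.degree v : ℝ)|
          = (G.degree u : ℝ) + (G.degree v : ℝ) - 2 := by
      intro u v hv
      rw [SimpleGraph.mem_neighborFinset] at hv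
      have hdu : (1 : ℝ) ≤ (G.degree u : ℝ) := by exact_mod_cast deg_pos G hv
      have hdv : (1 : ℝ) ≤ (G.degree v : ℝ) := by exact_mod_cast deg_pos G hv.symm
      rw [abs_eq_aux hdu hdv]
      by_cases huc : u = c
      · have hcv : G.Adj c v := huc ▸ hv
        right
        exact_mod_cast (hc v hcv.ne').2
      · left
        exact_mod_cast (hc u huc).2
    have hSeq : ∑ u : V, ∑ v ∈ G.neighborFinset u, |(G.degree u : ℝ) - (G.degree v : ℝ)|
        = ∑ u : V, ∑ v ∈ G.neighborFinset u, ((G.degree u : ℝ) + (G.degree v : ℝ) - 2) :=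
      Finset.sum_congr rfl fun u _ => Finset.sum_congr rfl fun v hv => hptw u v hv
    unfold Alb
    rw [hSeq, hT]; ring
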